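/- Let A, A' ∈ U(n) and let J_A = i·sign(−i D_A) where D_A is d/dt on L²([0,1],ℂⁿ) with boundary condition f(1) = −A f(0). Then J_{A'} − J_A is Hilbert-Schmidt if and only if A' = A. -/

import Mathlib

/-!
Both `J` and `J'` are diagonal, with eigenvalues `±i`, in the eigenbases `φ_{k,r}` and
`φ'_{l,s}`, so the matrix coefficient of `J' - J` from `φ_{k,r}` to `φ'_{l,s}` is
`(iσ' - iσ) ⟪φ'_{l,s}, φ_{k,r}⟫`. An explicit integral gives
`⟪φ'_{l,s}, φ_{k,r}⟫ = c_{rs} / (2πi(λ_r - λ'_s + k - l))` with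
`c_{rs} = ⟪v'_s, v_r⟫ (e^{2πi(λ_r - λ'_s)} - 1)` whenever the denominator is nonzero, and
the `c_{rs}` all vanish exactly when `A' = A`. If they do, every coefficient vanishes: when the
denominator is zero the two signs agree. If `c_{rs} ≠ 0`, choose `K` large and `L` small so that
for `k = K + j`, `l = L - i` the signs are `+1` and `-1`; with `a = λ_r - λ'_s + K - L > 0` the
squared coefficients `|c_{rs}|² / (π (a + j + i))²` form a divergent double series over `ℕ²`.
-/

open MeasureTheory Complex
open scoped InnerProductSpace

/-- Lebesgue measure restricted to the unit interval. -/
noncomputable def unitMeasure : MeasureTheory.Measure ℝ :=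
  MeasureTheory.volume.restrict (Set.Ioc (0 : ℝ) 1)

/-- The eigenfunction `φ_k(t) = exp(2πi(λ + k - ½)t)·v` of the boundary value
operator `D_A = d/dt`, `f(1) = -A f(0)`. -/
noncomputable def eigenFun {n : ℕ} (lam : ℝ) (k : ℤ) (v : EuclideanSpace ℂ (Fin n)) :
    ℝ → EuclideanSpace ℂ (Fin n) :=
  fun t => Complex.exp (2 * Real.pi * Complex.I * (lam + k - 1 / 2) * t) • v

theorem LinearIsometryEquiv.eq_iff_forall_inner_mul_sub_eq_zero {ι κ 𝕜 E : Type*} [Fintype ι]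
    [Fintype κ] [RCLike 𝕜] [NormedAddCommGroup E] [InnerProductSpace 𝕜 E] {A A' : E ≃ₗᵢ[𝕜] E}
    {v : OrthonormalBasis ι 𝕜 E} {v' : OrthonormalBasis κ 𝕜 E} {α : ι → 𝕜} {α' : κ → 𝕜}
    (hA : ∀ r, A (v r) = α r • v r) (hA' : ∀ s, A' (v' s) = α' s • v' s) :
    A' = A ↔ ∀ r s, ⟪v' s, v r⟫_𝕜 * (α r - α' s) = 0 := by
  constructor
  · rintro rfl r s
    have hunit : ‖α' s‖ = 1 := by simpa [hA', norm_smul] using A'.norm_map (v' s)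
    have hinner : ⟪A' (v' s), A' (v r)⟫_𝕜 = ⟪v' s, v r⟫_𝕜 := A'.inner_map_map _ _
    rw [hA', hA, inner_smul_left, inner_smul_right] at hinner
    have hconj : α' s * starRingEnd 𝕜 (α' s) = 1 := by simp [RCLike.mul_conj, hunit]
    linear_combination α' s * hinner - α r * ⟪v' s, v r⟫_𝕜 * hconj
  · intro h
    refine v'.toBasis.ext_linearIsometryEquiv fun s => ?_
    have hcoef (r : ι) : ⟪v r, v' s⟫_𝕜 * α r = α' s * ⟪v r, v' s⟫_𝕜 := by
      rcases mul_eq_zero.1 (h r s) with h0 | h0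
      · simp [inner_eq_zero_symm.1 h0]
      · rw [sub_eq_zero.1 h0, mul_comm]
    rw [OrthonormalBasis.coe_toBasis, hA', ← v.sum_repr' (v' s)]
    simp only [map_sum, map_smul, hA, smul_smul, hcoef, Finset.smul_sum]

theorem integral_exp_two_pi_I_mul_unitMeasure {μ : ℝ} (hμ : μ ≠ 0) :
    ∫ t : ℝ, exp (2 * Real.pi * I * μ * t) ∂unitMeasure =
      (exp (2 * Real.pi * I * μ) - 1) / (2 * Real.pi * I * μ) := by
  have hc : (2 * Real.pi * I * μ : ℂ) ≠ 0 := by simp [Real.pi_ne_zero, I_ne_zero, hμ]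
  rw [unitMeasure, ← intervalIntegral.integral_of_le zero_le_one, integral_exp_mul_complex hc]
  simp

theorem inner_toLp_eigenFun_of_ne {n : ℕ} {lam lam' : ℝ} {k l : ℤ}
    {v v' : EuclideanSpace ℂ (Fin n)} (hm : MemLp (eigenFun lam k v) 2 unitMeasure)
    (hm' : MemLp (eigenFun lam' l v') 2 unitMeasure) (hμ : lam - lam' + k - l ≠ 0) :
    ⟪hm'.toLp _, hm.toLp _⟫_ℂ = ⟪v', v⟫_ℂ * (exp (2 * Real.pi * I * (lam - lam')) - 1) /
      (2 * Real.pi * I * (lam - lam' + k - l : ℝ)) := by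
  have hpt (t : ℝ) : ⟪eigenFun lam' l v' t, eigenFun lam k v t⟫_ℂ =
      exp (2 * Real.pi * I * (lam - lam' + k - l : ℝ) * t) * ⟪v', v⟫_ℂ := by
    simp only [eigenFun, inner_smul_left, inner_smul_right, ← exp_conj, ← mul_assoc, ← exp_add]
    congr 2
    simp only [map_mul, map_sub, map_add, conj_I, conj_ofReal, map_intCast, map_one, map_ofNat,
      map_div₀]
    push_cast
    ring
  have hper : exp (2 * Real.pi * I * (lam - lam' + k - l : ℝ)) =
      exp (2 * Real.pi * I * (lam - lam')) := by
    rw [← (exp_periodic.int_mul (k - l)) (2 * Real.pi * I * (lam - lam'))]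
    push_cast
    ring_nf
  rw [L2.inner_def, integral_congr_ae (hm'.coeFn_toLp.mp (hm.coeFn_toLp.mono fun t h1 h2 => by
    rw [h1, h2, hpt])), integral_mul_const, integral_exp_two_pi_I_mul_unitMeasure hμ, hper]
  ring

theorem HilbertBasis.repr_apply_of_apply_eq_smul {ι 𝕜 E : Type*} [RCLike 𝕜]
    [NormedAddCommGroup E] [InnerProductSpace 𝕜 E] (b : HilbertBasis ι 𝕜 E) {T : E →L[𝕜] E}
    {σ : ι → 𝕜} (hT : ∀ i, T (b i) = σ i • b i) (x : E) (i : ι) :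
    b.repr (T x) i = σ i * b.repr x i := by
  have h := ((b.hasSum_repr x).mapL T).mapL (innerSL 𝕜 (b i))
  refine b.repr_apply_apply _ _ ▸ h.unique ?_
  convert hasSum_single i fun j hj => ?_ using 1
  · simp [hT, b.orthonormal.1 i, mul_comm]
  · simp [hT, b.orthonormal.inner_eq_zero hj.symm]

theorem HilbertBasis.summable_norm_sq_repr {ι κ 𝕜 E : Type*} [RCLike 𝕜]
    [NormedAddCommGroup E] [InnerProductSpace 𝕜 E] (b : HilbertBasis ι 𝕜 E) {x : κ → E}
    (hx : Summable fun p => ‖x p‖ ^ 2) :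
    Summable fun pq : κ × ι => ‖b.repr (x pq.1) pq.2‖ ^ 2 := by
  have hrow (p : κ) : HasSum (fun i => ‖b.repr (x p) i‖ ^ 2) (‖x p‖ ^ 2) := by
    have h := lp.hasSum_norm (p := 2) (by norm_num) (b.repr (x p))
    simp only [ENNReal.toReal_ofNat, Real.rpow_two, LinearIsometryEquiv.norm_map] at h
    exact h
  refine (summable_prod_of_nonneg fun _ => by positivity).2 ⟨fun p => (hrow p).summable, ?_⟩
  exact hx.congr fun p => (hrow p).tsum_eq.symm

theorem not_summable_inv_sq_add_add {a : ℝ} (ha : 0 < a) :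
    ¬ Summable fun p : ℕ × ℕ => ((a + p.1 + p.2) ^ 2)⁻¹ := by
  intro h
  have hrow := (summable_prod_of_nonneg fun _ => by positivity).1 h
  refine Real.not_summable_one_div_natCast ((summable_nat_add_iff 1).1 ?_)
  refine (hrow.2.mul_left ((a + 2) ^ 2)).of_nonneg_of_le (fun j => by positivity) fun j => ?_
  have hterm : ∀ i ∈ Finset.range (j + 1), (((a + 2) * (j + 1)) ^ 2)⁻¹ ≤ ((a + j + i) ^ 2)⁻¹ := by
    intro i hi
    have hij : (i : ℝ) ≤ j := by exact_mod_cast Nat.lt_succ_iff.1 (Finset.mem_range.1 hi)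
    gcongr
    nlinarith [mul_nonneg ha.le (Nat.cast_nonneg (α := ℝ) j)]
  calc 1 / ((j + 1 : ℕ) : ℝ) = (a + 2) ^ 2 * ((j + 1 : ℕ) * (((a + 2) * (j + 1)) ^ 2)⁻¹) := by
        push_cast; field_simp
    _ ≤ (a + 2) ^ 2 * ∑ i ∈ Finset.range (j + 1), ((a + j + i) ^ 2)⁻¹ := by
        gcongr
        simpa using Finset.card_nsmul_le_sum _ _ _ hterm
    _ ≤ (a + 2) ^ 2 * ∑' i : ℕ, ((a + j + i) ^ 2)⁻¹ := by
        gcongr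
        exact (hrow.1 j).sum_le_tsum _ fun _ _ => by positivity

/-- The matrix coefficient `(iσ' - iσ) ⟪φ'_l, φ_k⟫` of `J' - J`, where
`c = ⟪v', v⟫ (e^{2πi(λ - λ')} - 1)`.
Where `λ - λ' + k - l = 0` the division by zero gives `0`, which is still the true coefficient
since the two signs agree there. -/
noncomputable def signDiffCoeff (lam lam' : ℝ) (c : ℂ) (k l : ℤ) : ℂ :=
  (I * Real.sign (lam' + l - 1 / 2) - I * Real.sign (lam + k - 1 / 2)) *
    (c / (2 * Real.pi * I * (lam - lam' + k - l : ℝ)))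

theorem eq_zero_of_summable_norm_sq_signDiffCoeff {lam lam' : ℝ} {c : ℂ}
    (h : Summable fun kl : ℤ × ℤ => ‖signDiffCoeff lam lam' c kl.1 kl.2‖ ^ 2) : c = 0 := by
  by_contra hc
  obtain ⟨K, hK⟩ := exists_int_gt (1 / 2 - lam)
  obtain ⟨L, hL⟩ := exists_int_lt (1 / 2 - lam')
  set a := lam - lam' + K - L
  have ha : 0 < a := by linarith
  have hsub := h.comp_injective (i := fun ji : ℕ × ℕ => (K + ji.1, L - ji.2)) fun _ _ h => by
    simp only [Prod.mk.injEq] at h; ext <;> omega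
  refine not_summable_inv_sq_add_add ha ((hsub.mul_left (Real.pi ^ 2 / ‖c‖ ^ 2)).congr ?_)
  rintro ⟨j, i⟩
  have hμ : lam - lam' + ((K + j : ℤ) : ℝ) - ((L - i : ℤ) : ℝ) = a + j + i := by push_cast; ring
  have hk : 0 < lam + ((K + j : ℤ) : ℝ) - 1 / 2 := by push_cast; linarith
  have hl : lam' + ((L - i : ℤ) : ℝ) - 1 / 2 < 0 := by push_cast; linarith
  have hμpos : 0 < a + j + i := by positivity
  rw [Function.comp_apply, signDiffCoeff, hμ, Real.sign_of_pos hk, Real.sign_of_neg hl,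
    show (I * ((-1 : ℝ) : ℂ) - I * ((1 : ℝ) : ℂ)) * (c / (2 * Real.pi * I * ((a + j + i : ℝ) : ℂ)))
      = -(c / ((Real.pi * (a + j + i) : ℝ) : ℂ)) by push_cast; field_simp; ring,
    norm_neg, norm_div, norm_real, Real.norm_of_nonneg (by positivity)]
  field_simp

/-- `J_A` is encoded by its action on the Hilbert basis of eigenfunctions of `D_A`, and the
Hilbert–Schmidt property by square-summability of the images of that basis. -/
theorem JA_difference_hilbertSchmidt_iff (n : ℕ)
    (A A' : EuclideanSpace ℂ (Fin n) ≃ₗᵢ[ℂ] EuclideanSpace ℂ (Fin n))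
    (v v' : OrthonormalBasis (Fin n) ℂ (EuclideanSpace ℂ (Fin n)))
    (lam lam' : Fin n → ℝ)
    (hA : ∀ r, A (v r) = Complex.exp (2 * Real.pi * Complex.I * lam r) • v r)
    (hA' : ∀ r, A' (v' r) = Complex.exp (2 * Real.pi * Complex.I * lam' r) • v' r)
    (hmem : ∀ (k : ℤ) (r : Fin n), MeasureTheory.MemLp (eigenFun (lam r) k (v r)) 2 unitMeasure)
    (hmem' : ∀ (k : ℤ) (r : Fin n),
      MeasureTheory.MemLp (eigenFun (lam' r) k (v' r)) 2 unitMeasure)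
    (b b' : HilbertBasis (ℤ × Fin n) ℂ
      (MeasureTheory.Lp (EuclideanSpace ℂ (Fin n)) 2 unitMeasure))
    (hb : ∀ p : ℤ × Fin n, b p = (hmem p.1 p.2).toLp (eigenFun (lam p.2) p.1 (v p.2)))
    (hb' : ∀ p : ℤ × Fin n, b' p = (hmem' p.1 p.2).toLp (eigenFun (lam' p.2) p.1 (v' p.2)))
    (J J' : MeasureTheory.Lp (EuclideanSpace ℂ (Fin n)) 2 unitMeasure →L[ℂ]
      MeasureTheory.Lp (EuclideanSpace ℂ (Fin n)) 2 unitMeasure)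
    (hJ : ∀ p : ℤ × Fin n,
      J (b p) = (Complex.I * (Real.sign (lam p.2 + p.1 - 1 / 2) : ℂ)) • (b p))
    (hJ' : ∀ p : ℤ × Fin n,
      J' (b' p) = (Complex.I * (Real.sign (lam' p.2 + p.1 - 1 / 2) : ℂ)) • (b' p)) :
    (Summable fun p : ℤ × Fin n => ‖(J' - J) (b p)‖ ^ 2) ↔ A' = A := by
  set c : Fin n → Fin n → ℂ :=
    fun r s => ⟪v' s, v r⟫_ℂ * (exp (2 * Real.pi * I * (lam r - lam' s)) - 1)
  have hcoef (k l : ℤ) (r s : Fin n) :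
      b'.repr ((J' - J) (b (k, r))) (l, s) = signDiffCoeff (lam r) (lam' s) (c r s) k l := by
    rw [sub_apply, map_sub, lp.coeFn_sub, Pi.sub_apply, b'.repr_apply_of_apply_eq_smul hJ', hJ,
      map_smul, lp.coeFn_smul, Pi.smul_apply, smul_eq_mul, b'.repr_apply_apply, signDiffCoeff]
    by_cases hμ : lam r - lam' s + k - l = 0
    · rw [show lam' s + l - 1 / 2 = lam r + k - 1 / 2 by linarith]
      ring
    · rw [hb, hb', inner_toLp_eigenFun_of_ne _ _ hμ]
      ring
  have hc (r s : Fin n) : c r s = 0 ↔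
      ⟪v' s, v r⟫_ℂ * (exp (2 * Real.pi * I * lam r) - exp (2 * Real.pi * I * lam' s)) = 0 := by
    simp only [c]
    rw [mul_sub (2 * Real.pi * I : ℂ), exp_sub, div_sub_one (exp_ne_zero _), ← mul_div_assoc,
      div_eq_zero_iff]
    simp [exp_ne_zero]
  simp only [LinearIsometryEquiv.eq_iff_forall_inner_mul_sub_eq_zero hA hA', ← hc]
  constructor
  · intro hS r s
    refine eq_zero_of_summable_norm_sq_signDiffCoeff (lam := lam r) (lam' := lam' s) ?_
    simpa only [hcoef, Function.comp_def] using (b'.summable_norm_sq_repr hS).comp_injective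
      (i := fun kl : ℤ × ℤ => ((kl.1, r), (kl.2, s))) fun _ _ h => by simpa [Prod.ext_iff] using h
  · intro hc0
    have hzero (p : ℤ × Fin n) : (J' - J) (b p) = 0 := by
      refine b'.repr.map_eq_zero_iff.1 (lp.ext (funext fun q => ?_))
      rw [hcoef, signDiffCoeff, hc0, zero_div, mul_zero, lp.coeFn_zero, Pi.zero_apply]
    simp [hzero]
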